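/- arXiv:2112.04208 — 6 statements merged into one kernel-verified Lean document; each statement's English description precedes it below -/
import Mathlib

section
/- Let g be a polynomial of degree n ≥ 1 with complex coefficients, let K be the convex hull of its zeros, and let α be a nonzero complex number. Then every zero of the polynomial h(z) = g'(z) − α·g(z) lies in the set K + [0,n]·α⁻¹, i.e., every zero z of h can be written as z = w + t·α⁻¹ with w ∈ K and t a real number with 0 ≤ t ≤ n. -/
/-! Away from the roots `r` of `g` (counted with multiplicity), a zero `z` of `g' - α g` satisfies
`α = g'(z)/g(z) = ∑ 1/(z - r)`. Conjugating, `conj α = ∑ (z - r)/‖z - r‖²`, so with the weights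
`c_r = 1/‖z - r‖²` and `S = ∑ c_r` the point `z - conj α / S` is their centre of mass `w ∈ K`.
Since `conj α / S = (‖α‖² / S) α⁻¹`, it remains to bound `‖α‖² ≤ n S`, which is Cauchy–Schwarz. -/

open Finset Polynomial Set ComplexConjugate

lemma Complex.conj_eq_sq_norm_mul_inv (u : ℂ) : conj u = (‖u‖ ^ 2 : ℝ) * u⁻¹ := by
  rcases eq_or_ne u 0 with rfl | hu
  · simp
  · rw [Complex.ofReal_pow, ← Complex.mul_conj', mul_comm u, mul_assoc, mul_inv_cancel₀ hu,
      mul_one]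

lemma norm_sum_sq_le_card_mul_sum_norm_sq {ι E : Type*} [SeminormedAddCommGroup E]
    (s : Finset ι) (u : ι → E) : ‖∑ i ∈ s, u i‖ ^ 2 ≤ #s * ∑ i ∈ s, ‖u i‖ ^ 2 :=
  (pow_le_pow_left₀ (norm_nonneg _) (norm_sum_le s u) 2).trans (sq_sum_le_card_mul_sum_sq ..)

lemma Finset.sub_centerMass {ι E : Type*} [AddCommGroup E] [Module ℝ E] (s : Finset ι)
    {c : ι → ℝ} (hc : ∑ i ∈ s, c i ≠ 0) (p : ι → E) (x : E) :
    x - s.centerMass c p = (∑ i ∈ s, c i)⁻¹ • ∑ i ∈ s, c i • (x - p i) := by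
  simp only [centerMass, smul_sub, sum_sub_distrib, ← sum_smul, inv_smul_smul₀ hc]

theorem Complex.exists_mem_convexHull_eq_add_mul_inv_sum_inv {ι : Type*} [Fintype ι]
    [Nonempty ι] {p : ι → ℂ} {z : ℂ} (hz : ∀ i, z ≠ p i) :
    ∃ w ∈ convexHull ℝ (range p), ∃ t : ℝ, 0 ≤ t ∧ t ≤ Fintype.card ι ∧
      z = w + t * (∑ i, (z - p i)⁻¹)⁻¹ := by
  set u : ι → ℂ := fun i ↦ (z - p i)⁻¹
  set c : ι → ℝ := fun i ↦ ‖u i‖ ^ 2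
  have hc : ∀ i, 0 < c i := fun i ↦ by
    have : u i ≠ 0 := inv_ne_zero (sub_ne_zero.mpr (hz i))
    positivity
  have hS : 0 < ∑ i, c i := sum_pos (fun i _ ↦ hc i) univ_nonempty
  have hconj : ∑ i, c i • (z - p i) = conj (∑ i, u i) := by
    rw [map_sum]
    refine sum_congr rfl fun i _ ↦ ?_
    rw [Complex.conj_eq_sq_norm_mul_inv, inv_inv, Complex.real_smul]
  refine ⟨univ.centerMass c p, centerMass_mem_convexHull _ (fun i _ ↦ (hc i).le) hS
    (fun i _ ↦ mem_range_self i), ‖∑ i, u i‖ ^ 2 / ∑ i, c i, by positivity, ?_, ?_⟩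
  · rw [div_le_iff₀ hS, ← card_univ]
    exact norm_sum_sq_le_card_mul_sum_norm_sq _ _
  · have hw := univ.sub_centerMass hS.ne' p z
    rw [hconj, Complex.conj_eq_sq_norm_mul_inv, Complex.real_smul] at hw
    rw [eq_add_of_sub_eq' hw]
    push_cast
    ring

theorem Complex.exists_mem_convexHull_eq_add_mul_inv_multiset_sum_inv {M : Multiset ℂ}
    (hM : M ≠ 0) {z : ℂ} (hz : z ∉ M) :
    ∃ w ∈ convexHull ℝ (M.toFinset : Set ℂ), ∃ t : ℝ, 0 ≤ t ∧ t ≤ Multiset.card M ∧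
      z = w + t * (M.map fun r ↦ (z - r)⁻¹).sum⁻¹ := by
  obtain ⟨r, hr⟩ := Multiset.exists_mem_of_ne_zero hM
  have : Nonempty M := ⟨⟨r, ⟨0, Multiset.count_pos.mpr hr⟩⟩⟩
  have hzM : ∀ r : M, z ≠ r := fun r h ↦ hz (h ▸ Multiset.coe_mem)
  obtain ⟨w, hw, t, ht0, htM, hzw⟩ := Complex.exists_mem_convexHull_eq_add_mul_inv_sum_inv hzM
  have hrange : range (fun r : M ↦ (r : ℂ)) ⊆ M.toFinset := by
    rintro _ ⟨r, rfl⟩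
    simp
  refine ⟨w, convexHull_mono hrange hw, t, ht0, by simpa using htM, ?_⟩
  have hsum : ∑ r : M, (z - r)⁻¹ = (M.map fun r ↦ (z - r)⁻¹).sum :=
    congrArg Multiset.sum (Multiset.map_univ M fun r ↦ (z - r)⁻¹)
  rwa [hsum] at hzw

theorem takagi_degree_one_general (g : Polynomial ℂ) (n : ℕ) (hn : 1 ≤ n)
    (hdeg : g.natDegree = n) (α : ℂ) (z : ℂ)
    (hz : (Polynomial.derivative g - Polynomial.C α * g).eval z = 0) :
    ∃ w ∈ convexHull ℝ (g.roots.toFinset : Set ℂ),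
      ∃ t : ℝ, 0 ≤ t ∧ t ≤ n ∧ z = w + (t : ℂ) * α⁻¹ := by
  have hg : g ≠ 0 := by
    rintro rfl
    simp at hdeg
    omega
  by_cases hgz : g.eval z = 0
  · exact ⟨z, subset_convexHull ℝ _ (by simpa [hg] using hgz), 0, le_rfl, by positivity, by simp⟩
  have hα : α = (g.roots.map fun r ↦ (z - r)⁻¹).sum := by
    have hlog := (IsAlgClosed.splits g).eval_derivative_eq_eval_mul_sum hgz
    simp only [eval_sub, eval_mul, eval_C, sub_eq_zero, one_div] at hz hlog
    exact mul_left_cancel₀ hgz (by rw [mul_comm, ← hz, hlog])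
  have hroots : g.roots ≠ 0 := by
    rw [← Multiset.card_pos, IsAlgClosed.card_roots_eq_natDegree]
    omega
  have hzroots : z ∉ g.roots := by simpa [hg] using hgz
  rw [hα, ← hdeg, ← IsAlgClosed.card_roots_eq_natDegree]
  exact Complex.exists_mem_convexHull_eq_add_mul_inv_multiset_sum_inv hroots hzroots

/-- Takagi's degree-1 proposition: every zero of g' - α g lies in K + [0,n]·α⁻¹. -/
theorem takagi_degree_one (g : Polynomial ℂ) (n : ℕ) (hn : 1 ≤ n)
    (hdeg : g.natDegree = n) (α : ℂ) (hα : α ≠ 0) (z : ℂ)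
    (hz : (Polynomial.derivative g - Polynomial.C α * g).eval z = 0) :
    ∃ w ∈ convexHull ℝ (g.roots.toFinset : Set ℂ),
      ∃ t : ℝ, 0 ≤ t ∧ t ≤ n ∧ z = w + (t : ℂ) * α⁻¹ :=
  takagi_degree_one_general g n hn hdeg α z hz
end

section
/- Let g be a nonconstant polynomial with complex coefficients. Then every zero of its derivative g' lies in the convex hull of the zeros of g (Gauss–Lucas theorem). -/
open Polynomial

/-- Gauss–Lucas theorem: zeros of g' lie in the convex hull of the zeros of g. -/
theorem gauss_lucas (g : Polynomial ℂ) (hg : 1 ≤ g.natDegree) (z : ℂ)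
    (hz : (Polynomial.derivative g).eval z = 0) :
    z ∈ convexHull ℝ (g.roots.toFinset : Set ℂ) := by
  have hdeg : 0 < g.degree := natDegree_pos_iff_degree_pos.mp hg
  rw [eq_centerMass_of_eval_derivative_eq_zero hdeg hz]
  exact Finset.centerMass_mem_convexHull _ (fun w _ ↦ derivRootWeight_nonneg g z w)
    (sum_derivRootWeight_pos hdeg z) fun _ hw ↦ hw
end

section
/- Let g be a polynomial of degree n ≥ 1 with zeros β₁,…,βₙ (with multiplicity), and let z ∈ ℂ be such that g(z) ≠ 0 and ∑_{i=1}^n 1/(z − βᵢ) = α. Then z = ∑ᵢ λᵢβᵢ + κ·conj(α), where λᵢ = |z−βᵢ|⁻² / ∑ⱼ|z−βⱼ|⁻² and κ = 1 / ∑ⱼ|z−βⱼ|⁻²; in particular the λᵢ are positive and sum to 1, and κ > 0. -/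
/-!
Since `conj (w⁻¹) = w / |w|²`, the conjugate of `α = ∑ (z - βᵢ)⁻¹` is `∑ tᵢ (z - βᵢ)` with
`tᵢ = |z - βᵢ|⁻² > 0`, i.e. `conj α = S z - ∑ tᵢ βᵢ` where `S = ∑ tᵢ`. Dividing by `S` exhibits `z`
as the `tᵢ`-weighted barycentre of the `βᵢ` plus `S⁻¹ conj α`.
-/

open Finset ComplexConjugate

theorem Complex.conj_inv_eq_inv_sq_norm_mul (w : ℂ) :
    conj w⁻¹ = (((‖w‖ ^ 2)⁻¹ : ℝ) : ℂ) * w := by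
  rw [Complex.inv_def, map_mul, Complex.conj_conj, Complex.conj_ofReal,
    Complex.normSq_eq_norm_sq, mul_comm]

theorem Complex.eq_sum_div_mul_add_inv_mul_sum {ι : Type*} (s : Finset ι) (w : ι → ℝ)
    (hw : ∑ i ∈ s, w i ≠ 0) (z : ℂ) (β : ι → ℂ) :
    z = ∑ i ∈ s, ((w i / ∑ j ∈ s, w j : ℝ) : ℂ) * β i
      + ((∑ j ∈ s, w j)⁻¹ : ℝ) * ∑ i ∈ s, (w i : ℂ) * (z - β i) := by
  set S : ℂ := ((∑ j ∈ s, w j : ℝ) : ℂ) with hS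
  have hS0 : S ≠ 0 := Complex.ofReal_ne_zero.mpr hw
  have hmean :
      ∑ i ∈ s, ((w i / ∑ j ∈ s, w j : ℝ) : ℂ) * β i = S⁻¹ * ∑ i ∈ s, (w i : ℂ) * β i := by
    simp only [mul_sum, hS]
    refine sum_congr rfl fun i _ => ?_
    push_cast
    ring
  have hdisp : ∑ i ∈ s, (w i : ℂ) * (z - β i) = S * z - ∑ i ∈ s, (w i : ℂ) * β i := by
    rw [hS, Complex.ofReal_sum, sum_mul, ← sum_sub_distrib]
    exact sum_congr rfl fun i _ => by ring
  rw [hmean, hdisp, Complex.ofReal_inv, ← hS]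
  field_simp
  ring

/-- The conjugation step: z = ∑ λᵢ βᵢ + κ conj α with positive weights summing to 1. -/
theorem takagi_convex_combination (n : ℕ) (hn : 1 ≤ n) (β : Fin n → ℂ) (z α : ℂ)
    (hz : ∀ i, z ≠ β i) (hα : ∑ i, (z - β i)⁻¹ = α) :
    (∀ i : Fin n, 0 < (‖z - β i‖ ^ 2)⁻¹ / ∑ j, (‖z - β j‖ ^ 2)⁻¹) ∧
    (∑ i, (‖z - β i‖ ^ 2)⁻¹ / ∑ j, (‖z - β j‖ ^ 2)⁻¹) = 1 ∧
    0 < (∑ j, (‖z - β j‖ ^ 2)⁻¹)⁻¹ ∧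
    z = (∑ i, (((‖z - β i‖ ^ 2)⁻¹ / ∑ j, (‖z - β j‖ ^ 2)⁻¹ : ℝ) : ℂ) * β i)
        + (((∑ j, (‖z - β j‖ ^ 2)⁻¹)⁻¹ : ℝ) : ℂ) * (starRingEnd ℂ) α := by
  have hw : ∀ i, 0 < (‖z - β i‖ ^ 2)⁻¹ := fun i => by
    have := norm_pos_iff.mpr (sub_ne_zero.mpr (hz i))
    positivity
  have : Nonempty (Fin n) := Fin.pos_iff_nonempty.mp hn
  have hS : 0 < ∑ j, (‖z - β j‖ ^ 2)⁻¹ := sum_pos (fun j _ => hw j) univ_nonempty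
  refine ⟨fun i => div_pos (hw i) hS, by rw [← sum_div, div_self hS.ne'], inv_pos.mpr hS, ?_⟩
  have hconj : conj α = ∑ i, (((‖z - β i‖ ^ 2)⁻¹ : ℝ) : ℂ) * (z - β i) := by
    simp only [← hα, map_sum, Complex.conj_inv_eq_inv_sq_norm_mul]
  rw [hconj]
  exact Complex.eq_sum_div_mul_add_inv_mul_sum univ _ hS.ne' z β
end

section
/- Let f and g be polynomials with complex coefficients, deg f = m, deg g = n. Suppose f has a zero of multiplicity r at 0 (0 ≤ r ≤ m), with remaining zeros (with multiplicity) α₁,…,α_{m−r}, all nonzero. Let K be the convex hull of the zeros of g, and let h be the polynomial f(D)g obtained by substituting the differentiation operator D for z in f. Then either h is identically zero, or every zero of h lies in the set K + ∑_{i=1}^{m−r} [0, n−r]·αᵢ⁻¹. -/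
/-!
Writing `f = a Xʳ ∏ (X - αᵢ)`, we get `h = a ∏ (D - αᵢ) Dʳ g`, and by Gauss–Lucas the zeros of
`Dʳ g` lie in `K`. If `P'(z) = α P(z)` and `P(z) ≠ 0`, then `∑ 1 / (z - ρ) = α` over the zeros `ρ`
of `P`; conjugating, with weights `wρ = 1 / |z - ρ|²` one gets
`z - (∑ wρ ρ) / ∑ wρ = conj α / ∑ wρ = t α⁻¹`, where `t = |α|² / ∑ wρ ≤ deg P` by Cauchy–Schwarz.
Since `D - αᵢ` preserves degrees and the target region is convex, induction over the factors
`D - αᵢ` concludes.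
-/

open Finset Polynomial
open scoped ComplexConjugate

/-- `K + ∑ i, [0, N] • v i` in Minkowski-sum notation. -/
def addSegments (K : Set ℂ) {k : ℕ} (v : Fin k → ℂ) (N : ℝ) : Set ℂ :=
  {x | ∃ w ∈ K, ∃ t : Fin k → ℝ, (∀ i, 0 ≤ t i ∧ t i ≤ N) ∧ x = w + ∑ i, (t i : ℂ) * v i}

section addSegments

variable {K L : Set ℂ} {k : ℕ} {v : Fin k → ℂ} {N M : ℝ}

theorem convex_addSegments (hK : Convex ℝ K) : Convex ℝ (addSegments K v N) := by
  rintro _ ⟨w₁, hw₁, t₁, ht₁, rfl⟩ _ ⟨w₂, hw₂, t₂, ht₂, rfl⟩ a b ha hb hab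
  refine ⟨a • w₁ + b • w₂, hK hw₁ hw₂ ha hb hab, fun i ↦ a * t₁ i + b * t₂ i, fun i ↦ ⟨?_, ?_⟩, ?_⟩
  · have := (ht₁ i).1
    have := (ht₂ i).1
    positivity
  · calc a * t₁ i + b * t₂ i ≤ a * N + b * N := by gcongr <;> simp [ht₁ i, ht₂ i]
      _ = N := by rw [← add_mul, hab, one_mul]
  · simp only [Complex.real_smul, mul_add, add_mul, Finset.mul_sum, Finset.sum_add_distrib,
      Complex.ofReal_add, Complex.ofReal_mul, mul_assoc]
    ring

theorem addSegments_mono (hKL : K ⊆ L) (hNM : N ≤ M) :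
    addSegments K v N ⊆ addSegments L v M := by
  rintro _ ⟨w, hw, t, ht, rfl⟩
  exact ⟨w, hKL hw, t, fun i ↦ ⟨(ht i).1, (ht i).2.trans hNM⟩, rfl⟩

theorem subset_addSegments (hN : 0 ≤ N) : K ⊆ addSegments K v N :=
  fun w hw ↦ ⟨w, hw, 0, fun _ ↦ ⟨le_rfl, hN⟩, by simp⟩

theorem add_mul_mem_addSegments {v : Fin (k + 1) → ℂ} {w : ℂ}
    (hw : w ∈ addSegments K (fun i ↦ v i.succ) N) {t : ℝ} (ht : t ∈ Set.Icc 0 N) :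
    w + t * v 0 ∈ addSegments K v N := by
  obtain ⟨u, hu, s, hs, rfl⟩ := hw
  refine ⟨u, hu, Fin.cons t s, Fin.cases ht (by simpa using hs), ?_⟩
  simp only [Fin.sum_univ_succ, Fin.cons_zero, Fin.cons_succ]
  ring

end addSegments

namespace Polynomial

theorem rootSet_self {R : Type*} [CommRing R] [IsDomain R] [DecidableEq R] (p : R[X]) :
    p.rootSet R = (p.roots.toFinset : Set R) := by
  rw [rootSet_def, aroots_def, Algebra.algebraMap_self, map_id]

section Domain

variable {R : Type*} [CommRing R]

theorem aeval_derivative_apply_eq_sum (f g : R[X]) :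
    aeval (derivative : Module.End R R[X]) f g =
      f.sum fun i c ↦ C c * derivative^[i] g := by
  simp [aeval_endomorphism, Module.End.pow_apply, smul_eq_C_mul]

theorem aeval_derivative_X_sub_C_apply (β : R) (q : R[X]) :
    aeval (derivative : Module.End R R[X]) (X - C β) q = derivative q - C β * q := by
  simp [Module.algebraMap_end_apply, smul_eq_C_mul]

variable [IsDomain R]

theorem degree_derivative_sub_C_mul {β : R} (hβ : β ≠ 0) (q : R[X]) :
    (derivative q - C β * q).degree = q.degree := by
  rcases eq_or_ne q 0 with rfl | hq
  · simp
  rw [degree_sub_eq_right_of_degree_lt] <;> rw [degree_C_mul hβ]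
  exact degree_derivative_lt hq

theorem degree_aeval_derivative_prod_X_sub_C {ι : Type*} (s : Finset ι) {β : ι → R}
    (hβ : ∀ i ∈ s, β i ≠ 0) (q : R[X]) :
    (aeval (derivative : Module.End R R[X]) (∏ i ∈ s, (X - C (β i))) q).degree = q.degree := by
  classical
  induction s using Finset.induction_on with
  | empty => simp
  | insert j s hj ih =>
    rw [Finset.prod_insert hj, map_mul, Module.End.mul_apply, aeval_derivative_X_sub_C_apply,
      degree_derivative_sub_C_mul (hβ j (Finset.mem_insert_self j s)),
      ih fun i hi ↦ hβ i (Finset.mem_insert_of_mem hi)]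

end Domain

section ComplexRoots

variable {P : ℂ[X]} {z : ℂ}

theorem sum_derivRootWeight_smul_sub (hPz : P.eval z ≠ 0) :
    ∑ x ∈ P.roots.toFinset, P.derivRootWeight z x • (z - x) =
      conj (P.derivative.eval z / P.eval z) := by
  rw [(IsAlgClosed.splits P).eval_derivative_div_eval_of_ne_zero hPz,
    Finset.sum_multiset_map_count, map_sum]
  refine Finset.sum_congr rfl fun x hx ↦ ?_
  have hzx : z - x ≠ 0 := by
    rw [sub_ne_zero]
    rintro rfl
    exact hPz ((mem_roots'.mp (Multiset.mem_toFinset.mp hx)).2)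
  simp [derivRootWeight, hPz, count_roots, ← Complex.conj_mul', field]

theorem norm_eval_derivative_div_eval_sq_le (hPz : P.eval z ≠ 0) :
    ‖P.derivative.eval z / P.eval z‖ ^ 2 ≤
      P.natDegree * ∑ x ∈ P.roots.toFinset, P.derivRootWeight z x := by
  have hzx : ∀ x ∈ P.roots.toFinset, 0 < ‖z - x‖ := fun x hx ↦ by
    rw [norm_pos_iff, sub_ne_zero]
    rintro rfl
    exact hPz ((mem_roots'.mp (Multiset.mem_toFinset.mp hx)).2)
  have hnorm : ‖P.derivative.eval z / P.eval z‖ ≤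
      ∑ x ∈ P.roots.toFinset, (P.rootMultiplicity x : ℝ) / ‖z - x‖ := by
    rw [(IsAlgClosed.splits P).eval_derivative_div_eval_of_ne_zero hPz,
      Finset.sum_multiset_map_count]
    refine (norm_sum_le _ _).trans_eq (Finset.sum_congr rfl fun x _ ↦ ?_)
    simp [count_roots, div_eq_mul_inv]
  have hdeg : ∑ x ∈ P.roots.toFinset, (P.rootMultiplicity x : ℝ) = P.natDegree := by
    rw [(IsAlgClosed.splits P).natDegree_eq_card_roots, ← Multiset.toFinset_sum_count_eq]
    simp [count_roots]
  calc ‖P.derivative.eval z / P.eval z‖ ^ 2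
      ≤ (∑ x ∈ P.roots.toFinset, (P.rootMultiplicity x : ℝ) / ‖z - x‖) ^ 2 := by gcongr
    _ ≤ (∑ x ∈ P.roots.toFinset, (P.rootMultiplicity x : ℝ)) *
          ∑ x ∈ P.roots.toFinset, P.derivRootWeight z x := by
      refine Finset.sum_sq_le_sum_mul_sum_of_sq_le_mul _ (fun _ _ ↦ by positivity)
        (fun _ _ ↦ derivRootWeight_nonneg _ _ _) fun x hx ↦ le_of_eq ?_
      have := (hzx x hx).ne'
      simp only [derivRootWeight, if_neg hPz]
      field_simp
    _ = _ := by rw [hdeg]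

theorem exists_eq_add_of_eval_derivative_eq_mul (hP : 0 < P.degree) {α : ℂ}
    (hz : P.derivative.eval z = α * P.eval z) :
    ∃ w ∈ convexHull ℝ (P.rootSet ℂ), ∃ t ∈ Set.Icc (0 : ℝ) P.natDegree,
      z = w + t * α⁻¹ := by
  have hP₀ : P ≠ 0 := ne_zero_of_degree_gt hP
  by_cases hPz : P.eval z = 0
  · exact ⟨z, subset_convexHull ℝ _ (by simp [mem_rootSet_of_ne hP₀, hPz]), 0,
      ⟨le_rfl, by positivity⟩, by simp⟩
  have hα : P.derivative.eval z / P.eval z = α := by rw [hz, mul_div_cancel_right₀ _ hPz]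
  set s := P.roots.toFinset
  set weight := P.derivRootWeight z
  set W := ∑ x ∈ s, weight x
  have hW : 0 < W := sum_derivRootWeight_pos hP z
  refine ⟨s.centerMass weight id, ?_, ‖α‖ ^ 2 / W, ⟨by positivity, ?_⟩, ?_⟩
  · rw [rootSet_self]
    exact s.centerMass_mem_convexHull (fun _ _ ↦ derivRootWeight_nonneg _ _ _) hW
      fun x hx ↦ hx
  · rw [div_le_iff₀ hW, ← hα]
    exact norm_eval_derivative_div_eval_sq_le hPz
  · have hmoment : ∑ x ∈ s, weight x • (z - x) = W • z - ∑ x ∈ s, weight x • x := by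
      simp only [smul_sub, Finset.sum_sub_distrib, W, Finset.sum_smul]
    have hconj : ((‖α‖ ^ 2 : ℝ) : ℂ) * α⁻¹ = conj α := by
      rcases eq_or_ne α 0 with rfl | hα₀
      · simp
      · rw [Complex.ofReal_pow, ← Complex.conj_mul', mul_assoc, mul_inv_cancel₀ hα₀, mul_one]
    rw [← hα, ← sum_derivRootWeight_smul_sub hPz, hα, hmoment] at hconj
    have hshift : ((‖α‖ ^ 2 / W : ℝ) : ℂ) * α⁻¹ = W⁻¹ • ((‖α‖ ^ 2 : ℝ) * α⁻¹ : ℂ) := by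
      rw [Complex.real_smul]
      push_cast
      ring
    rw [hshift, hconj, Finset.centerMass, smul_sub, inv_smul_smul₀ hW.ne']
    simp only [id]
    abel

end ComplexRoots

theorem rootSet_aeval_derivative_prod_subset {k : ℕ} (β : Fin k → ℂ) (hβ : ∀ i, β i ≠ 0)
    (q : ℂ[X]) :
    (aeval (derivative : Module.End ℂ ℂ[X]) (∏ i, (X - C (β i))) q).rootSet ℂ ⊆
      addSegments (convexHull ℝ (q.rootSet ℂ)) (fun i ↦ (β i)⁻¹) q.natDegree := by
  induction k with
  | zero =>
    simpa using (subset_convexHull ℝ _).trans (subset_addSegments (Nat.cast_nonneg _))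
  | succ k ih =>
    intro z hz
    rw [Fin.prod_univ_succ, map_mul, Module.End.mul_apply, aeval_derivative_X_sub_C_apply] at hz
    set Q := aeval (derivative : Module.End ℂ ℂ[X]) (∏ i : Fin k, (X - C (β i.succ))) q
    obtain ⟨hne, heval⟩ := mem_rootSet.mp hz
    rw [coe_aeval_eq_eval, eval_sub, eval_mul, eval_C, sub_eq_zero] at heval
    have hQ : Q.degree = q.degree :=
      degree_aeval_derivative_prod_X_sub_C _ (fun i _ ↦ hβ i.succ) q
    have hQpos : 0 < Q.degree := by
      by_contra! hQ₀
      obtain ⟨c, hc⟩ : ∃ c, Q = C c := ⟨_, eq_C_of_degree_le_zero hQ₀⟩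
      rw [hc] at hne heval
      simp only [derivative_C, eval_zero, eval_C, zero_eq_mul] at heval
      simp [heval.resolve_left (hβ 0)] at hne
    obtain ⟨w, hw, t, ht, rfl⟩ := exists_eq_add_of_eval_derivative_eq_mul hQpos heval
    rw [natDegree_eq_of_degree_eq hQ] at ht
    have hw' := convexHull_min (ih (fun i ↦ β i.succ) (fun i ↦ hβ i.succ))
      (convex_addSegments (convex_convexHull ℝ _)) hw
    exact add_mul_mem_addSegments (v := fun i ↦ (β i)⁻¹) hw' ht

theorem convexHull_rootSet_iterate_derivative_subset (g : ℂ[X]) (j : ℕ) :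
    convexHull ℝ ((derivative^[j] g).rootSet ℂ) ⊆ convexHull ℝ (g.rootSet ℂ) := by
  induction j with
  | zero => rfl
  | succ j ih =>
    refine (convexHull_min ?_ (convex_convexHull ℝ _)).trans ih
    rw [Function.iterate_succ_apply']
    rcases lt_or_ge 0 (derivative^[j] g).degree with hpos | hle
    · exact rootSet_derivative_subset_convexHull_rootSet hpos
    · simp [derivative_of_natDegree_zero (natDegree_eq_zero_iff_degree_le_zero.mpr hle)]

end Polynomial

theorem takagi_general (f g : Polynomial ℂ) (m n r : ℕ)
    (hn : g.natDegree = n) (a : ℂ) (ha : a ≠ 0)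
    (αs : Fin (m - r) → ℂ) (hαs : ∀ i, αs i ≠ 0)
    (hf : f = Polynomial.C a * (∏ i, (Polynomial.X - Polynomial.C (αs i))) * Polynomial.X ^ r)
    (h : Polynomial ℂ)
    (hh : h = f.sum fun i c => Polynomial.C c * (Polynomial.derivative^[i] g)) :
    h = 0 ∨ ∀ z : ℂ, h.eval z = 0 →
      ∃ w ∈ convexHull ℝ (g.roots.toFinset : Set ℂ), ∃ t : Fin (m - r) → ℝ,
        (∀ i, 0 ≤ t i ∧ t i ≤ (n : ℝ) - r) ∧ z = w + ∑ i, ((t i : ℂ) * (αs i)⁻¹) := by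
  set q := derivative^[r] g
  set Q := aeval (derivative : Module.End ℂ ℂ[X]) (∏ i, (X - C (αs i))) q
  have hhQ : h = C a * Q := by
    rw [hh, ← aeval_derivative_apply_eq_sum, hf]
    simp [Q, q, Module.End.mul_apply, Module.algebraMap_end_apply, Module.End.pow_apply,
      smul_eq_C_mul]
  by_cases hq : q = 0
  · left
    simp [hhQ, Q, hq]
  right
  intro z hz
  have hQ : Q ≠ 0 := by
    rw [← degree_ne_bot, degree_aeval_derivative_prod_X_sub_C _ (fun i _ ↦ hαs i)]
    exact degree_ne_bot.mpr hq
  have hzQ : z ∈ Q.rootSet ℂ := by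
    simpa [mem_rootSet_of_ne hQ, hhQ, ha] using hz
  have hrn : r ≤ n := by
    by_contra! hnr
    exact hq (iterate_derivative_eq_zero (hn ▸ hnr))
  have hdeg : (q.natDegree : ℝ) ≤ n - r := by
    rw [← Nat.cast_sub hrn, ← hn]
    exact_mod_cast natDegree_iterate_derivative g r
  rw [← rootSet_self]
  exact addSegments_mono (convexHull_rootSet_iterate_derivative_subset g r) hdeg
    (rootSet_aeval_derivative_prod_subset αs hαs q hzQ)

/-- Takagi's theorem on the zeros of the differential composition f(D)g. -/
theorem takagi (f g : Polynomial ℂ) (m n r : ℕ) (hm : f.natDegree = m)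
    (hn : g.natDegree = n) (hr : r ≤ m) (a : ℂ) (ha : a ≠ 0)
    (αs : Fin (m - r) → ℂ) (hαs : ∀ i, αs i ≠ 0)
    (hf : f = Polynomial.C a * (∏ i, (Polynomial.X - Polynomial.C (αs i))) * Polynomial.X ^ r)
    (h : Polynomial ℂ)
    (hh : h = f.sum fun i c => Polynomial.C c * (Polynomial.derivative^[i] g)) :
    h = 0 ∨ ∀ z : ℂ, h.eval z = 0 →
      ∃ w ∈ convexHull ℝ (g.roots.toFinset : Set ℂ), ∃ t : Fin (m - r) → ℝ,
        (∀ i, 0 ≤ t i ∧ t i ≤ (n : ℝ) - r) ∧ z = w + ∑ i, ((t i : ℂ) * (αs i)⁻¹) :=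
  takagi_general f g m n r hn a ha αs hαs hf h hh
end

section
/- Let z, β₁,…,βₙ ∈ ℂ with z ≠ βᵢ for all i, and suppose ∑_{i=1}^n 1/(z−βᵢ) = α for some α ∈ ℂ. If α = 0 and n ≥ 1, then z lies in the convex hull of {β₁,…,βₙ}. -/
open Finset

/-- Cesàro's argument: if ∑ 1/(z-βᵢ) = 0 then z lies in the convex hull of the βᵢ. -/
theorem cesaro (n : ℕ) (hn : 1 ≤ n) (β : Fin n → ℂ) (z : ℂ) (hz : ∀ i, z ≠ β i)
    (h0 : ∑ i, (z - β i)⁻¹ = 0) :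
    z ∈ convexHull ℝ (Set.range β) := by
  set t : Fin n → ℝ := fun i => (Complex.normSq (z - β i))⁻¹ with ht
  have hne : ∀ i, z - β i ≠ 0 := fun i => sub_ne_zero.mpr (hz i)
  have htpos : ∀ i, 0 < t i := fun i =>
    inv_pos.mpr (Complex.normSq_pos.mpr (hne i))
  have key : ∑ i, t i • (z - β i) = 0 := by
    have hc := congrArg (starRingEnd ℂ) h0
    rw [map_sum, map_zero] at hc
    rw [← hc]
    refine Finset.sum_congr rfl fun i _ => ?_
    rw [map_inv₀, Complex.inv_def, Complex.conj_conj,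
      Complex.normSq_conj, Complex.real_smul]
    rw [Complex.ofReal_inv]
    ring
  have hsum : 0 < ∑ i, t i := by
    obtain ⟨i⟩ := Fin.pos_iff_nonempty.mp hn
    exact Finset.sum_pos (fun i _ => htpos i) ⟨i, mem_univ i⟩
  have hzc : z = Finset.univ.centerMass t β := by
    have h1 : ∑ i, t i • β i = (∑ i, t i) • z := by
      have := key
      simp only [smul_sub, Finset.sum_sub_distrib] at this
      rw [← Finset.sum_smul] at this
      linear_combination (norm := module) -this
    rw [Finset.centerMass, h1, inv_smul_smul₀ hsum.ne']
  rw [hzc]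
  exact Finset.centerMass_mem_convexHull _ (fun i _ => (htpos i).le) hsum
    (fun i _ => Set.mem_range_self i)
end

section
/- Let g be a polynomial over ℂ with all zeros real and contained in an interval [a,b], and let α be a nonzero real number. Then every real zero z of g'−α·g satisfies a ≤ z ≤ b + n/α if α > 0, and a + n/α ≤ z ≤ b if α < 0, where n = deg g ≥ 1. -/
/-!
A real zero of `g' - α g` that is a root of `g` already lies in `[a, b]`. At any other real `z`,
`g'(z) / g(z) = ∑ 1 / (z - xᵢ)` over the roots `xᵢ` of `g`, so a zero of `g' - α g` satisfies
`∑ 1 / (z - xᵢ) = α`. For `α > 0`: if `z < a` every term is negative, and if `z > b` every term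
is at most `1 / (z - b)`, whence `α ≤ n / (z - b)`. The case `α < 0` follows by the reflection
`x ↦ -x`.
-/

open Polynomial

namespace Multiset

variable {s : Multiset ℝ} {a b z α : ℝ}

theorem sum_one_div_sub_nonpos (h : ∀ x ∈ s, z ≤ x) : (s.map fun x => 1 / (z - x)).sum ≤ 0 :=
  calc (s.map fun x => 1 / (z - x)).sum ≤ (s.map fun _ => (0 : ℝ)).sum :=
        sum_map_le_sum_map _ _ fun x hx => one_div_nonpos.2 (sub_nonpos.2 (h x hx))
    _ = 0 := by simp

theorem sum_one_div_sub_le_card_div (h : ∀ x ∈ s, x ≤ b) (hbz : b < z) :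
    (s.map fun x => 1 / (z - x)).sum ≤ s.card / (z - b) :=
  calc (s.map fun x => 1 / (z - x)).sum ≤ (s.map fun _ => 1 / (z - b)).sum :=
        sum_map_le_sum_map _ _ fun x hx =>
          one_div_le_one_div_of_le (sub_pos.2 hbz) (sub_le_sub_left (h x hx) z)
    _ = s.card / (z - b) := by rw [map_const', sum_replicate, nsmul_eq_mul, mul_one_div]

theorem mem_Icc_of_sum_one_div_sub_eq_of_pos (hs : ∀ x ∈ s, x ∈ Set.Icc a b) (hα : 0 < α)
    (h : (s.map fun x => 1 / (z - x)).sum = α) : z ∈ Set.Icc a (b + s.card / α) := by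
  constructor
  · by_contra! hza
    have := sum_one_div_sub_nonpos fun x hx => hza.le.trans (hs x hx).1
    linarith
  · by_contra! hbz
    have hdiv : 0 ≤ (s.card : ℝ) / α := div_nonneg s.card.cast_nonneg hα.le
    have hzb : 0 < z - b := by linarith
    have hle := sum_one_div_sub_le_card_div (fun x hx => (hs x hx).2) (sub_pos.1 hzb)
    have hlt : (s.card : ℝ) / (z - b) < α := by
      rw [div_lt_iff₀ hzb, mul_comm]
      exact (div_lt_iff₀ hα).1 (by linarith)
    linarith

theorem sum_map_neg_one_div_sub (s : Multiset ℝ) (z : ℝ) :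
    ((s.map Neg.neg).map fun x => 1 / (-z - x)).sum = -(s.map fun x => 1 / (z - x)).sum := by
  rw [map_map, ← sum_map_neg]
  congr 1
  refine map_congr rfl fun x _ => ?_
  rw [Function.comp_apply, ← neg_sub, div_neg, sub_neg_eq_add, neg_add_eq_sub]

theorem mem_Icc_of_sum_one_div_sub_eq_of_neg (hs : ∀ x ∈ s, x ∈ Set.Icc a b) (hα : α < 0)
    (h : (s.map fun x => 1 / (z - x)).sum = α) : z ∈ Set.Icc (a + s.card / α) b := by
  have hs' : ∀ x ∈ s.map Neg.neg, x ∈ Set.Icc (-b) (-a) := by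
    simp only [mem_map, forall_exists_index, and_imp, forall_apply_eq_imp_iff₂]
    exact fun x hx => ⟨neg_le_neg (hs x hx).2, neg_le_neg (hs x hx).1⟩
  have := mem_Icc_of_sum_one_div_sub_eq_of_pos hs' (neg_pos.2 hα)
    (by rw [sum_map_neg_one_div_sub, h])
  rw [card_map, div_neg] at this
  constructor <;> linarith [this.1, this.2]

theorem map_ofReal_map_re {m : Multiset ℂ} (h : ∀ w ∈ m, ∃ x : ℝ, w = x) :
    (m.map Complex.re).map Complex.ofReal = m := by
  rw [map_map]
  conv_rhs => rw [← map_id' m]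
  refine map_congr rfl fun w hw => ?_
  obtain ⟨x, rfl⟩ := h w hw
  simp

end Multiset

theorem Polynomial.sum_one_div_sub_eq_of_roots_eq_map_ofReal {g : ℂ[X]} {s : Multiset ℝ}
    (hgs : g.roots = s.map Complex.ofReal)
    {z α : ℝ} (hz : g.eval (z : ℂ) ≠ 0) (h : (derivative g - C (α : ℂ) * g).eval (z : ℂ) = 0) :
    (s.map fun x => 1 / (z - x)).sum = α := by
  have := (IsAlgClosed.splits g).eval_derivative_div_eval_of_ne_zero hz
  rw [eval_sub, eval_mul, eval_C, sub_eq_zero] at h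
  rw [h, mul_div_cancel_right₀ _ hz, hgs, Multiset.map_map] at this
  apply Complex.ofReal_injective
  rw [this, ← Complex.ofRealHom_eq_coe, map_multiset_sum, Multiset.map_map]
  simp

theorem takagi_real_general (g : Polynomial ℂ) (n : ℕ) (hn : 1 ≤ n) (hdeg : g.natDegree = n)
    (a b : ℝ) (hroots : ∀ w ∈ g.roots, ∃ x : ℝ, a ≤ x ∧ x ≤ b ∧ w = (x : ℂ))
    (α : ℝ) (z : ℝ)
    (hz : (Polynomial.derivative g - Polynomial.C (α : ℂ) * g).eval (z : ℂ) = 0) :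
    (0 < α → a ≤ z ∧ z ≤ b + n / α) ∧ (α < 0 → a + n / α ≤ z ∧ z ≤ b) := by
  set s := g.roots.map Complex.re
  have hgs : g.roots = s.map Complex.ofReal :=
    (Multiset.map_ofReal_map_re fun w hw => (hroots w hw).imp fun _ hx => hx.2.2).symm
  have hs : ∀ x ∈ s, x ∈ Set.Icc a b := by
    simp only [s, Multiset.mem_map, forall_exists_index, and_imp, forall_apply_eq_imp_iff₂]
    intro w hw
    obtain ⟨x, hax, hxb, rfl⟩ := hroots w hw
    exact ⟨hax, hxb⟩
  have hcard : s.card = n := by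
    rw [Multiset.card_map, IsAlgClosed.card_roots_eq_natDegree, hdeg]
  by_cases hgz : g.eval (z : ℂ) = 0
  · have hg : g ≠ 0 := by
      rintro rfl
      rw [natDegree_zero] at hdeg
      omega
    obtain ⟨hza, hzb⟩ := hs z (Multiset.mem_map.2 ⟨z, (mem_roots hg).2 hgz, Complex.ofReal_re z⟩)
    have hn0 : (0 : ℝ) ≤ n := n.cast_nonneg
    exact ⟨fun hα => ⟨hza, by linarith [div_nonneg hn0 hα.le]⟩,
      fun hα => ⟨by linarith [div_nonpos_of_nonneg_of_nonpos hn0 hα.le], hzb⟩⟩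
  · have hsum := sum_one_div_sub_eq_of_roots_eq_map_ofReal hgs hgz hz
    rw [← hcard]
    exact ⟨fun hα => Multiset.mem_Icc_of_sum_one_div_sub_eq_of_pos hs hα hsum,
      fun hα => Multiset.mem_Icc_of_sum_one_div_sub_eq_of_neg hs hα hsum⟩

/-- Real-rooted specialization of Takagi's degree-1 proposition. -/
theorem takagi_real (g : Polynomial ℂ) (n : ℕ) (hn : 1 ≤ n) (hdeg : g.natDegree = n)
    (a b : ℝ) (hroots : ∀ w ∈ g.roots, ∃ x : ℝ, a ≤ x ∧ x ≤ b ∧ w = (x : ℂ))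
    (α : ℝ) (hα : α ≠ 0) (z : ℝ)
    (hz : (Polynomial.derivative g - Polynomial.C (α : ℂ) * g).eval (z : ℂ) = 0) :
    (0 < α → a ≤ z ∧ z ≤ b + n / α) ∧ (α < 0 → a + n / α ≤ z ∧ z ≤ b) :=
  takagi_real_general g n hn hdeg a b hroots α z hz
end
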